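/- arXiv:1906.00528 — 3 statements merged into one kernel-verified Lean document; each statement's English description precedes it below -/
import Mathlib

section
/- Suppose that for each j = 1, …, k the sequential ignorability condition E[ζ·(1 − A_j) | ℳ_j] = (1 − p_j)·E[ζ | ℳ_j] holds almost surely. Then the inverse-probability-weighted telescoping identity holds: E[ ∏_{j=1}^{k} (1 − A_j)/(1 − p_j) · ζ | ℳ₁ ] = E[ζ | ℳ₁] almost surely. -/
open MeasureTheory Filter

private lemma ipw_integ_of_ae_bdd {Ω : Type*} {m0 : MeasurableSpace Ω} {μ : Measure Ω}
    [IsFiniteMeasure μ] {g : Ω → ℝ} {D : ℝ}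
    (hm : AEStronglyMeasurable g μ) (hb : ∀ᵐ ω ∂μ, |g ω| ≤ D) :
    Integrable g μ :=
  Integrable.mono' (integrable_const D) hm (by simpa [Real.norm_eq_abs] using hb)

private lemma ipw_integ_ae_bdd_mul {Ω : Type*} {m0 : MeasurableSpace Ω} {μ : Measure Ω}
    {f g : Ω → ℝ} {D : ℝ} (hg : Integrable g μ) (hf : AEStronglyMeasurable f μ)
    (hb : ∀ᵐ ω ∂μ, |f ω| ≤ D) :
    Integrable (fun ω => f ω * g ω) μ := by
  refine Integrable.mono' ((hg.abs).const_mul (max D 0)) (hf.mul hg.aestronglyMeasurable) ?_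
  filter_upwards [hb] with ω hω
  rw [Real.norm_eq_abs, abs_mul]
  exact mul_le_mul_of_nonneg_right (hω.trans (le_max_left _ _)) (abs_nonneg _)

private lemma ipw_aux {Ω : Type*} {m0 : MeasurableSpace Ω} (μ : Measure Ω)
    [IsProbabilityMeasure μ]
    (k : ℕ) (M : ℕ → MeasurableSpace Ω)
    (hstep : ∀ j, 1 ≤ j → j ≤ k → M j ≤ M (j + 1))
    (hle : ∀ j, 1 ≤ j → j ≤ k + 1 → M j ≤ m0)
    (A p : ℕ → Ω → ℝ)
    (hA : ∀ j, 1 ≤ j → j ≤ k → Measurable[M (j + 1)] (A j))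
    (hA01 : ∀ j, 1 ≤ j → j ≤ k → ∀ ω, A j ω = 0 ∨ A j ω = 1)
    (hpsm : ∀ j, 1 ≤ j → j ≤ k → StronglyMeasurable[M j] (p j))
    (δ : ℝ) (hδ : 0 < δ)
    (hpj : ∀ j, 1 ≤ j → j ≤ k → ∀ᵐ ω ∂μ, p j ω ≤ 1 - δ)
    (ζ : Ω → ℝ) (hζmeas : Measurable ζ) (C : ℝ) (hC : ∀ ω, |ζ ω| ≤ C)
    (hign : ∀ j, 1 ≤ j → j ≤ k →
      μ[(fun ω => ζ ω * (1 - A j ω))|M j] =ᵐ[μ]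
        fun ω => (1 - p j ω) * (μ[ζ|M j]) ω) :
    ∀ n, n ≤ k →
      μ[(fun ω => (∏ j ∈ Finset.Icc (k + 1 - n) k, (1 - A j ω) / (1 - p j ω)) * ζ ω)|M (k + 1 - n)] =ᵐ[μ]
        μ[ζ|M (k + 1 - n)] := by
  have hζint : Integrable ζ μ :=
    ipw_integ_of_ae_bdd hζmeas.aestronglyMeasurable (Filter.Eventually.of_forall hC)
  -- measurability of the weights w.r.t. the ambient σ-algebra
  have hWm0 : ∀ j, 1 ≤ j → j ≤ k → Measurable (fun ω => (1 - A j ω) / (1 - p j ω)) := by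
    intro j h1 h2
    exact ((measurable_const.sub ((hA j h1 h2).mono (hle (j + 1) (by omega) (by omega))
        le_rfl)).div
      (measurable_const.sub (((hpsm j h1 h2).measurable).mono (hle j h1 (by omega)) le_rfl)))
  -- a.e. bounds for the weights
  have hWbd : ∀ᵐ ω ∂μ, ∀ j ∈ Finset.Icc 1 k,
      0 ≤ (1 - A j ω) / (1 - p j ω) ∧ (1 - A j ω) / (1 - p j ω) ≤ 1 / δ := by
    rw [Filter.eventually_all_finset]
    intro j hj
    obtain ⟨h1, h2⟩ := Finset.mem_Icc.mp hj
    filter_upwards [hpj j h1 h2] with ω hω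
    have hd : (0:ℝ) < 1 - p j ω := by linarith
    have hnum0 : (0:ℝ) ≤ 1 - A j ω := by rcases hA01 j h1 h2 ω with h | h <;> simp [h]
    have hnum1 : (1:ℝ) - A j ω ≤ 1 := by rcases hA01 j h1 h2 ω with h | h <;> simp [h]
    exact ⟨div_nonneg hnum0 hd.le, div_le_div₀ zero_le_one hnum1 hδ (by linarith)⟩
  -- a.e. bound for products of weights
  have hprodbd : ∀ m, 1 ≤ m → ∀ᵐ ω ∂μ,
      |∏ j ∈ Finset.Icc m k, (1 - A j ω) / (1 - p j ω)|
        ≤ (1 / δ) ^ (Finset.Icc m k).card := by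
    intro m hm
    filter_upwards [hWbd] with ω hω
    rw [Finset.abs_prod]
    calc ∏ j ∈ Finset.Icc m k, |(1 - A j ω) / (1 - p j ω)|
        ≤ ∏ _j ∈ Finset.Icc m k, (1 / δ) := by
          refine Finset.prod_le_prod (fun j _ => abs_nonneg _) (fun j hj => ?_)
          obtain ⟨hj1, hj2⟩ := Finset.mem_Icc.mp hj
          obtain ⟨h0, h1⟩ := hω j (Finset.mem_Icc.mpr ⟨le_trans hm hj1, hj2⟩)
          rwa [abs_of_nonneg h0]
      _ = (1 / δ) ^ (Finset.Icc m k).card := Finset.prod_const _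
  -- integrability of the weighted outcomes
  have hfint : ∀ m, 1 ≤ m →
      Integrable (fun ω => (∏ j ∈ Finset.Icc m k, (1 - A j ω) / (1 - p j ω)) * ζ ω) μ := by
    intro m hm
    have hmeas : AEStronglyMeasurable
        (fun ω => ∏ j ∈ Finset.Icc m k, (1 - A j ω) / (1 - p j ω)) μ := by
      refine (Finset.measurable_prod _ (fun j hj => ?_)).aestronglyMeasurable
      obtain ⟨hj1, hj2⟩ := Finset.mem_Icc.mp hj
      exact hWm0 j (le_trans hm hj1) hj2
    exact ipw_integ_ae_bdd_mul hζint hmeas (hprodbd m hm)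
  intro n
  induction n with
  | zero =>
    intro _
    have h0 : k + 1 - 0 = k + 1 := rfl
    rw [h0]
    have hemp : Finset.Icc (k + 1) k = ∅ := Finset.Icc_eq_empty (by omega)
    have : (fun ω => (∏ j ∈ Finset.Icc (k + 1) k, (1 - A j ω) / (1 - p j ω)) * ζ ω) = ζ := by
      funext ω; rw [hemp]; simp
    rw [this]
  | succ n ih =>
    intro hn
    have e1 : k + 1 - (n + 1) = k - n := by omega
    have e2 : k + 1 - n = (k - n) + 1 := by omega
    rw [e1]
    specialize ih (by omega)
    rw [e2] at ih
    set m := k - n with hmdef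
    have hm1 : 1 ≤ m := by omega
    have hmk : m ≤ k := by omega
    have hMm1 : M m ≤ M (m + 1) := hstep m hm1 hmk
    have hMm1le : M (m + 1) ≤ m0 := hle (m + 1) (by omega) (by omega)
    have hIcc : Finset.Icc m k = insert m (Finset.Icc (m + 1) k) := by
      ext j; simp only [Finset.mem_Icc, Finset.mem_insert]; omega
    have hnotmem : m ∉ Finset.Icc (m + 1) k := by simp
    have hfeq : (fun ω => (∏ j ∈ Finset.Icc m k, (1 - A j ω) / (1 - p j ω)) * ζ ω)
        = fun ω => ((1 - A m ω) / (1 - p m ω)) *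
            ((∏ j ∈ Finset.Icc (m + 1) k, (1 - A j ω) / (1 - p j ω)) * ζ ω) := by
      funext ω; rw [hIcc, Finset.prod_insert hnotmem, mul_assoc]
    rw [hfeq]
    set g : Ω → ℝ := fun ω => (∏ j ∈ Finset.Icc (m + 1) k, (1 - A j ω) / (1 - p j ω)) * ζ ω
      with hgdef
    have hgint : Integrable g μ := hfint (m + 1) (by omega)
    have hWmSM : StronglyMeasurable[M (m + 1)] (fun ω => (1 - A m ω) / (1 - p m ω)) :=
      Measurable.stronglyMeasurable
        ((measurable_const.sub (hA m hm1 hmk)).div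
          (measurable_const.sub (((hpsm m hm1 hmk).measurable).mono hMm1 le_rfl)))
    have hWgint : Integrable (fun ω => ((1 - A m ω) / (1 - p m ω)) * g ω) μ := by
      have := hfint m hm1; rwa [hfeq] at this
    -- pull out weight m at level m+1 and apply the induction hypothesis
    have hinner : μ[(fun ω => ((1 - A m ω) / (1 - p m ω)) * g ω)|M (m + 1)] =ᵐ[μ]
        fun ω => ((1 - A m ω) / (1 - p m ω)) * (μ[ζ|M (m + 1)]) ω := by
      refine (condExp_mul_of_stronglyMeasurable_left hWmSM hWgint hgint).trans ?_
      filter_upwards [ih] with ω hω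
      simp only [Pi.mul_apply]
      rw [hω]
    -- measurability/integrability facts at level m
    have hqmeas : Measurable (fun ω => (1 - p m ω)⁻¹) :=
      ((measurable_const.sub
        (((hpsm m hm1 hmk).measurable).mono (hle m hm1 (by omega)) le_rfl))).inv
    have hqSM : StronglyMeasurable[M m] (fun ω => (1 - p m ω)⁻¹) :=
      Measurable.stronglyMeasurable ((measurable_const.sub (hpsm m hm1 hmk).measurable).inv)
    have hAbd : ∀ᵐ ω ∂μ, |1 - A m ω| ≤ (1:ℝ) := by
      refine Filter.Eventually.of_forall fun ω => ?_
      rcases hA01 m hm1 hmk ω with h | h <;> simp [h]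
    have hAmeas : Measurable (fun ω => 1 - A m ω) :=
      measurable_const.sub ((hA m hm1 hmk).mono hMm1le le_rfl)
    have hqbd : ∀ᵐ ω ∂μ, |(1 - p m ω)⁻¹| ≤ 1 / δ := by
      filter_upwards [hpj m hm1 hmk] with ω hω
      have hd : (0:ℝ) < 1 - p m ω := by linarith
      rw [abs_of_pos (inv_pos.mpr hd), one_div]
      exact inv_anti₀ hδ (by linarith)
    have hhint : Integrable (fun ω => (1 - A m ω) * (μ[ζ|M (m + 1)]) ω) μ :=
      ipw_integ_ae_bdd_mul integrable_condExp hAmeas.aestronglyMeasurable hAbd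
    have hqhint : Integrable
        (fun ω => (1 - p m ω)⁻¹ * ((1 - A m ω) * (μ[ζ|M (m + 1)]) ω)) μ :=
      ipw_integ_ae_bdd_mul hhint hqmeas.aestronglyMeasurable hqbd
    have hASM : StronglyMeasurable[M (m + 1)] (fun ω => 1 - A m ω) :=
      Measurable.stronglyMeasurable (measurable_const.sub (hA m hm1 hmk))
    have hAζint : Integrable (fun ω => (1 - A m ω) * ζ ω) μ :=
      ipw_integ_ae_bdd_mul hζint hAmeas.aestronglyMeasurable hAbd
    -- chain for μ[(1-A m)·E[ζ|M(m+1)] | M m]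
    have hchain : μ[(fun ω => (1 - A m ω) * (μ[ζ|M (m + 1)]) ω)|M m] =ᵐ[μ]
        fun ω => (1 - p m ω) * (μ[ζ|M m]) ω := by
      have hpull3 : μ[(fun ω => (1 - A m ω) * ζ ω)|M (m + 1)] =ᵐ[μ]
          fun ω => (1 - A m ω) * (μ[ζ|M (m + 1)]) ω :=
        condExp_mul_of_stronglyMeasurable_left hASM hAζint hζint
      calc μ[(fun ω => (1 - A m ω) * (μ[ζ|M (m + 1)]) ω)|M m]
          =ᵐ[μ] μ[μ[(fun ω => (1 - A m ω) * ζ ω)|M (m + 1)]|M m] :=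
            condExp_congr_ae hpull3.symm
        _ =ᵐ[μ] μ[(fun ω => (1 - A m ω) * ζ ω)|M m] := condExp_condExp_of_le hMm1 hMm1le
        _ =ᵐ[μ] μ[(fun ω => ζ ω * (1 - A m ω))|M m] :=
            condExp_congr_ae (Filter.Eventually.of_forall fun ω => mul_comm _ _)
        _ =ᵐ[μ] fun ω => (1 - p m ω) * (μ[ζ|M m]) ω := hign m hm1 hmk
    -- main calculation
    calc μ[(fun ω => ((1 - A m ω) / (1 - p m ω)) * g ω)|M m]
        =ᵐ[μ] μ[μ[(fun ω => ((1 - A m ω) / (1 - p m ω)) * g ω)|M (m + 1)]|M m] :=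
          (condExp_condExp_of_le hMm1 hMm1le).symm
      _ =ᵐ[μ] μ[(fun ω => ((1 - A m ω) / (1 - p m ω)) * (μ[ζ|M (m + 1)]) ω)|M m] :=
          condExp_congr_ae hinner
      _ =ᵐ[μ] μ[(fun ω => (1 - p m ω)⁻¹ * ((1 - A m ω) * (μ[ζ|M (m + 1)]) ω))|M m] :=
          condExp_congr_ae (Filter.Eventually.of_forall fun ω => by ring)
      _ =ᵐ[μ] fun ω => (1 - p m ω)⁻¹ *
            (μ[(fun ω => (1 - A m ω) * (μ[ζ|M (m + 1)]) ω)|M m]) ω :=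
          condExp_mul_of_stronglyMeasurable_left hqSM hqhint hhint
      _ =ᵐ[μ] fun ω => (1 - p m ω)⁻¹ * ((1 - p m ω) * (μ[ζ|M m]) ω) := by
          filter_upwards [hchain] with ω hω
          rw [hω]
      _ =ᵐ[μ] μ[ζ|M m] := by
          filter_upwards [hpj m hm1 hmk] with ω hω
          have hne : (1:ℝ) - p m ω ≠ 0 := by intro h; nlinarith
          rw [inv_mul_cancel_left₀ hne]

/-- inverse-probability-weighted telescoping identity.
Let `(Ω, ℱ, P)` be a probability space with a filtration `ℳ₁ ⊆ ⋯ ⊆ ℳ_k ⊆ ℱ`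
(convention `ℳ_{k+1} := ℱ`), and for `j = 1, …, k` let `A_j` be a `{0,1}`-valued
ℳ_{j+1}-measurable random variable with `p_j := E[A_j | ℳ_j] ≤ 1 − δ` a.s. for some
`δ > 0`.  Let `ζ` be a bounded random variable.  If for each `j = 1, …, k` the
sequential ignorability condition `E[ζ(1 − A_j) | ℳ_j] = (1 − p_j)·E[ζ | ℳ_j]` holds
a.s., then `E[∏_{j=1}^{k} (1 − A_j)/(1 − p_j) · ζ | ℳ₁] = E[ζ | ℳ₁]` a.s. -/
theorem ipw_telescoping_identity
    {Ω : Type*} {m0 : MeasurableSpace Ω} (μ : Measure Ω) [IsProbabilityMeasure μ]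
    (k : ℕ) (M : ℕ → MeasurableSpace Ω)
    (hMmono : ∀ j, 1 ≤ j → j + 1 ≤ k → M j ≤ M (j + 1))
    (hM : ∀ j ∈ Finset.Icc 1 k, M j ≤ m0)
    (hMtop : M (k + 1) = m0)
    (Aseq : ℕ → Ω → ℝ)
    (hAseq : ∀ j ∈ Finset.Icc 1 k, Measurable[M (j + 1)] (Aseq j))
    (hAseq01 : ∀ j ∈ Finset.Icc 1 k, ∀ ω, Aseq j ω = 0 ∨ Aseq j ω = 1)
    (δ : ℝ) (hδ : 0 < δ)
    (hpj : ∀ j ∈ Finset.Icc 1 k, ∀ᵐ ω ∂μ, (μ[Aseq j|M j]) ω ≤ 1 - δ)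
    (ζ : Ω → ℝ) (hζmeas : Measurable ζ) (hζbd : ∃ C, ∀ ω, |ζ ω| ≤ C)
    (hseqign : ∀ j ∈ Finset.Icc 1 k,
      μ[(fun ω => ζ ω * (1 - Aseq j ω))|M j] =ᵐ[μ]
        fun ω => (1 - (μ[Aseq j|M j]) ω) * (μ[ζ|M j]) ω) :
    μ[(fun ω => (∏ j ∈ Finset.Icc 1 k,
        (1 - Aseq j ω) / (1 - (μ[Aseq j|M j]) ω)) * ζ ω)|M 1] =ᵐ[μ]
      μ[ζ|M 1] := by
  obtain ⟨C, hC⟩ := hζbd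
  have hstep : ∀ j, 1 ≤ j → j ≤ k → M j ≤ M (j + 1) := by
    intro j h1 h2
    by_cases h : j + 1 ≤ k
    · exact hMmono j h1 h
    · have hjk : j = k := by omega
      subst hjk
      rw [hMtop]
      exact hM j (Finset.mem_Icc.mpr ⟨h1, le_rfl⟩)
  have hle : ∀ j, 1 ≤ j → j ≤ k + 1 → M j ≤ m0 := by
    intro j h1 h2
    by_cases h : j ≤ k
    · exact hM j (Finset.mem_Icc.mpr ⟨h1, h⟩)
    · have hjk : j = k + 1 := by omega
      subst hjk
      rw [hMtop]
  have h := ipw_aux μ k M hstep hle Aseq (fun j => μ[Aseq j|M j])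
    (fun j h1 h2 => hAseq j (Finset.mem_Icc.mpr ⟨h1, h2⟩))
    (fun j h1 h2 => hAseq01 j (Finset.mem_Icc.mpr ⟨h1, h2⟩))
    (fun j h1 h2 => stronglyMeasurable_condExp)
    δ hδ
    (fun j h1 h2 => hpj j (Finset.mem_Icc.mpr ⟨h1, h2⟩))
    ζ hζmeas C hC
    (fun j h1 h2 => hseqign j (Finset.mem_Icc.mpr ⟨h1, h2⟩))
    k le_rfl
  simp only [show k + 1 - k = 1 from by omega] at h
  exact h
end

section
/- For any B ∈ L²(P) with Bσ integrable, set R := E[Bσ | 𝒱]. Then (assuming the displayed quantities lie in L²(P)) the element (R − T⁻¹·E[RW | ℋ])·W·σ belongs to Λᗮ, and B − (R − T⁻¹·E[RW | ℋ])·W·σ is orthogonal in L²(P) to every element of Λᗮ; that is, (R − T⁻¹·E[RW | ℋ])·W·σ is the orthogonal projection of B onto Λᗮ. -/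
/-!
The coefficient `d₀ = (R - T⁻¹ E[RW | ℋ]) W` is `𝒱`-measurable and `E[d₀ | ℋ] = 0`, because
pulling the `ℋ`-measurable factor `T⁻¹ E[RW | ℋ]` out of `E[· W | ℋ]` leaves `E[RW | ℋ]`.
For `f = dσ ∈ Λᗮ`, conditioning on `𝒱` gives `E[(B - d₀σ) σ | 𝒱] = R - d₀ / W = T⁻¹ E[RW | ℋ]`,
which is `ℋ`-measurable, so `E[(B - d₀σ) dσ] = E[T⁻¹ E[RW | ℋ] · E[d | ℋ]] = 0`.
-/

open MeasureTheory

variable {Ω : Type*}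

/-- `W := (E[σ² | 𝒱])⁻¹`. -/
noncomputable def Wfun {m0 : MeasurableSpace Ω} (μ : Measure Ω) (mV : MeasurableSpace Ω)
    (σ : Ω → ℝ) : Ω → ℝ :=
  fun ω => ((μ[(fun ω' => (σ ω')^2)|mV]) ω)⁻¹

/-- `T := E[W | ℋ]`. -/
noncomputable def Tfun {m0 : MeasurableSpace Ω} (μ : Measure Ω)
    (mV mH : MeasurableSpace Ω) (σ : Ω → ℝ) : Ω → ℝ :=
  μ[Wfun μ mV σ|mH]

/-- `Λᗮ = {d·σ : d 𝒱-measurable, E[d | ℋ] = 0 a.s., d·σ ∈ L²}`. -/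
def LambdaPerp {m0 : MeasurableSpace Ω} (μ : Measure Ω)
    (mV mH : MeasurableSpace Ω) (σ : Ω → ℝ) : Set (Ω → ℝ) :=
  {f | ∃ d : Ω → ℝ, StronglyMeasurable[mV] d ∧ μ[d|mH] =ᵐ[μ] 0 ∧
    f = (fun ω => d ω * σ ω) ∧ MemLp f 2 μ}

/-- `R := E[Bσ | 𝒱]`. -/
noncomputable def Rfun {m0 : MeasurableSpace Ω} (μ : Measure Ω)
    (mV : MeasurableSpace Ω) (σ B : Ω → ℝ) : Ω → ℝ :=
  μ[(fun ω => B ω * σ ω)|mV]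

section

variable {m m0 : MeasurableSpace Ω} {μ : Measure Ω}

-- `|d| ≤ (d² v + v⁻¹) / 2` by AM-GM.
lemma integrable_of_integrable_sq_mul_of_integrable_inv {d v : Ω → ℝ}
    (hd : AEStronglyMeasurable d μ) (hv : ∀ᵐ ω ∂μ, 0 < v ω)
    (hdv : Integrable (fun ω => d ω ^ 2 * v ω) μ) (hv_inv : Integrable (fun ω => (v ω)⁻¹) μ) :
    Integrable d μ := by
  refine Integrable.mono' ((hdv.add hv_inv).div_const 2) hd ?_
  filter_upwards [hv] with ω hvω
  have hsq : 0 ≤ (|d ω| * v ω - 1) ^ 2 / v ω := by positivity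
  rw [Real.norm_eq_abs, Pi.add_apply, ← sq_abs (d ω)]
  field_simp at hsq ⊢
  nlinarith [hsq]

lemma integrable_of_memLp_two_mul_of_integrable_inv_condExp_sq (hm : m ≤ m0) {d σ : Ω → ℝ}
    (hd : StronglyMeasurable[m] d) (hdσ : MemLp (fun ω => d ω * σ ω) 2 μ) (hσ : MemLp σ 2 μ)
    (hpos : ∀ᵐ ω ∂μ, 0 < μ[fun ω => σ ω ^ 2|m] ω)
    (hinv : Integrable (fun ω => (μ[fun ω => σ ω ^ 2|m] ω)⁻¹) μ) :
    Integrable d μ := by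
  have hd2σ2 : Integrable ((fun ω => d ω ^ 2) * fun ω => σ ω ^ 2) μ :=
    hdσ.integrable_sq.congr (.of_forall fun ω => by simp only [Pi.mul_apply]; ring)
  have hpull := condExp_mul_of_stronglyMeasurable_left (hd.pow 2) hd2σ2 hσ.integrable_sq
  exact integrable_of_integrable_sq_mul_of_integrable_inv (hd.mono hm).aestronglyMeasurable hpos
    (integrable_condExp.congr hpull) hinv

lemma integrable_mul_condExp_of_stronglyMeasurable {c X : Ω → ℝ} (hc : StronglyMeasurable[m] c)
    (hcX : Integrable (c * X) μ) (hX : Integrable X μ) : Integrable (c * μ[X|m]) μ :=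
  integrable_condExp.congr (condExp_mul_of_stronglyMeasurable_left hc hcX hX)

lemma integral_mul_condExp_of_stronglyMeasurable (hm : m ≤ m0) [SigmaFinite (μ.trim hm)]
    {c X : Ω → ℝ} (hc : StronglyMeasurable[m] c) (hcX : Integrable (c * X) μ)
    (hX : Integrable X μ) : ∫ ω, (c * μ[X|m]) ω ∂μ = ∫ ω, (c * X) ω ∂μ :=
  calc ∫ ω, (c * μ[X|m]) ω ∂μ = ∫ ω, μ[c * X|m] ω ∂μ :=
        integral_congr_ae (condExp_mul_of_stronglyMeasurable_left hc hcX hX).symm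
    _ = ∫ ω, (c * X) ω ∂μ := integral_condExp hm

lemma integral_mul_eq_zero_of_condExp_eq_zero (hm : m ≤ m0) [SigmaFinite (μ.trim hm)]
    {c X : Ω → ℝ} (hc : StronglyMeasurable[m] c) (hcX : Integrable (c * X) μ)
    (hX : Integrable X μ) (hX_cond : μ[X|m] =ᵐ[μ] 0) : ∫ ω, (c * X) ω ∂μ = 0 :=
  calc ∫ ω, (c * X) ω ∂μ = ∫ ω, (c * μ[X|m]) ω ∂μ :=
        (integral_mul_condExp_of_stronglyMeasurable hm hc hcX hX).symm
    _ = ∫ _, (0 : ℝ) ∂μ := integral_congr_ae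
        (hX_cond.mono fun ω h => by rw [Pi.mul_apply, h, Pi.zero_apply, mul_zero])
    _ = 0 := integral_zero Ω ℝ

lemma condExp_sub_inv_condExp_mul_condExp_mul_eq_zero {R W : Ω → ℝ} (hW : Integrable W μ)
    (hRW : Integrable (fun ω => R ω * W ω) μ) (hpos : ∀ᵐ ω ∂μ, 0 < μ[W|m] ω)
    (hint : Integrable
      (fun ω => (R ω - (μ[W|m] ω)⁻¹ * μ[fun ω' => R ω' * W ω'|m] ω) * W ω) μ) :
    μ[fun ω => (R ω - (μ[W|m] ω)⁻¹ * μ[fun ω' => R ω' * W ω'|m] ω) * W ω|m] =ᵐ[μ] 0 := by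
  set a : Ω → ℝ := fun ω => (μ[W|m] ω)⁻¹ * μ[fun ω' => R ω' * W ω'|m] ω
  have ha : StronglyMeasurable[m] a :=
    (stronglyMeasurable_condExp.measurable.inv.mul
      stronglyMeasurable_condExp.measurable).stronglyMeasurable
  have haW : Integrable (a * W) μ :=
    (hRW.sub hint).congr (.of_forall fun ω => by simp only [Pi.sub_apply, Pi.mul_apply]; ring)
  have hsplit : μ[fun ω => (R ω - a ω) * W ω|m] =ᵐ[μ] μ[fun ω => R ω * W ω|m] - μ[a * W|m] :=
    (condExp_congr_ae (.of_forall fun ω => by simp only [Pi.sub_apply, Pi.mul_apply]; ring)).trans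
      (condExp_sub hRW haW m)
  filter_upwards [hsplit, condExp_mul_of_stronglyMeasurable_left ha haW hW, hpos]
    with ω h_split h_pull h_pos
  rw [h_split, Pi.sub_apply, h_pull, Pi.mul_apply, Pi.zero_apply]
  simp only [a]
  field_simp
  ring

lemma condExp_residual_mul_eq {a B σ : Ω → ℝ} (ha : StronglyMeasurable[m] a)
    (hσ : MemLp σ 2 μ) (hpos : ∀ᵐ ω ∂μ, 0 < μ[fun ω => σ ω ^ 2|m] ω)
    (hBσ : Integrable (fun ω => B ω * σ ω) μ)
    (hproj : MemLp (fun ω => (μ[fun ω => B ω * σ ω|m] ω - a ω) *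
      (μ[fun ω => σ ω ^ 2|m] ω)⁻¹ * σ ω) 2 μ) :
    μ[fun ω => (B ω - (μ[fun ω => B ω * σ ω|m] ω - a ω) *
      (μ[fun ω => σ ω ^ 2|m] ω)⁻¹ * σ ω) * σ ω|m] =ᵐ[μ] a := by
  set d₀ : Ω → ℝ := fun ω => (μ[fun ω => B ω * σ ω|m] ω - a ω) * (μ[fun ω => σ ω ^ 2|m] ω)⁻¹
  have hd₀ : StronglyMeasurable[m] d₀ :=
    ((stronglyMeasurable_condExp.measurable.sub ha.measurable).mul
      stronglyMeasurable_condExp.measurable.inv).stronglyMeasurable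
  have hd₀σ2 : Integrable (d₀ * fun ω => σ ω ^ 2) μ :=
    (hproj.integrable_mul hσ).congr (.of_forall fun ω => by simp only [Pi.mul_apply]; ring)
  have hsplit : μ[fun ω => (B ω - d₀ ω * σ ω) * σ ω|m] =ᵐ[μ]
      μ[fun ω => B ω * σ ω|m] - μ[d₀ * fun ω => σ ω ^ 2|m] :=
    (condExp_congr_ae (.of_forall fun ω => by simp only [Pi.sub_apply, Pi.mul_apply]; ring)).trans
      (condExp_sub hBσ hd₀σ2 m)
  filter_upwards [hsplit, condExp_mul_of_stronglyMeasurable_left hd₀ hd₀σ2 hσ.integrable_sq, hpos]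
    with ω h_split h_pull h_pos
  rw [h_split, Pi.sub_apply, h_pull, Pi.mul_apply]
  simp only [d₀]
  field_simp
  ring

end

theorem projection_onto_LambdaPerp_general
    {m0 : MeasurableSpace Ω} (μ : Measure Ω) [IsProbabilityMeasure μ]
    (mH mV : MeasurableSpace Ω) (hHV : mH ≤ mV) (hV : mV ≤ m0)
    (σ : Ω → ℝ) (hσ2 : MemLp σ 2 μ)
    (hσvar : ∀ᵐ ω ∂μ, 0 < (μ[(fun ω' => (σ ω')^2)|mV]) ω)
    (hWint : Integrable (Wfun μ mV σ) μ)
    (hTpos : ∀ᵐ ω ∂μ, 0 < Tfun μ mV mH σ ω)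
    (B : Ω → ℝ) (hB2 : MemLp B 2 μ)
    (hBσInt : Integrable (fun ω => B ω * σ ω) μ)
    (hRWInt : Integrable (fun ω => Rfun μ mV σ B ω * Wfun μ mV σ ω) μ)
    (hdInt : Integrable (fun ω => (Rfun μ mV σ B ω - (Tfun μ mV mH σ ω)⁻¹ *
      (μ[(fun ω' => Rfun μ mV σ B ω' * Wfun μ mV σ ω')|mH]) ω) * Wfun μ mV σ ω) μ)
    (hprojL2 : MemLp (fun ω => (Rfun μ mV σ B ω - (Tfun μ mV mH σ ω)⁻¹ *
      (μ[(fun ω' => Rfun μ mV σ B ω' * Wfun μ mV σ ω')|mH]) ω) *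
      Wfun μ mV σ ω * σ ω) 2 μ) :
    (fun ω => (Rfun μ mV σ B ω - (Tfun μ mV mH σ ω)⁻¹ *
        (μ[(fun ω' => Rfun μ mV σ B ω' * Wfun μ mV σ ω')|mH]) ω) *
        Wfun μ mV σ ω * σ ω) ∈ LambdaPerp μ mV mH σ ∧
      ∀ f ∈ LambdaPerp μ mV mH σ,
        ∫ ω, (B ω - (Rfun μ mV σ B ω - (Tfun μ mV mH σ ω)⁻¹ *
          (μ[(fun ω' => Rfun μ mV σ B ω' * Wfun μ mV σ ω')|mH]) ω) *
          Wfun μ mV σ ω * σ ω) * f ω ∂μ = 0 := by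
  set W := Wfun μ mV σ
  set T := Tfun μ mV mH σ
  set R := Rfun μ mV σ B
  set a : Ω → ℝ := fun ω => (T ω)⁻¹ * μ[fun ω' => R ω' * W ω'|mH] ω
  set d₀ : Ω → ℝ := fun ω => (R ω - a ω) * W ω
  have ha : StronglyMeasurable[mH] a :=
    (stronglyMeasurable_condExp.measurable.inv.mul
      stronglyMeasurable_condExp.measurable).stronglyMeasurable
  have hd₀ : StronglyMeasurable[mV] d₀ :=
    ((stronglyMeasurable_condExp.measurable.sub (ha.mono hHV).measurable).mul
      stronglyMeasurable_condExp.measurable.inv).stronglyMeasurable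
  refine ⟨⟨d₀, hd₀, condExp_sub_inv_condExp_mul_condExp_mul_eq_zero hWint hRWInt hTpos hdInt,
    rfl, hprojL2⟩, ?_⟩
  rintro _ ⟨d, hd, hd_cond, rfl, hdσ⟩
  set X : Ω → ℝ := fun ω => (B ω - d₀ ω * σ ω) * σ ω
  have hX : Integrable X μ := (hB2.sub hprojL2).integrable_mul hσ2
  have hdX : Integrable (d * X) μ :=
    ((hB2.sub hprojL2).integrable_mul hdσ).congr
      (.of_forall fun ω => by simp only [X, Pi.mul_apply, Pi.sub_apply]; ring)
  have hX_cond : μ[X|mV] =ᵐ[μ] a :=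
    condExp_residual_mul_eq (ha.mono hHV) hσ2 hσvar hBσInt hprojL2
  have hd_int : Integrable d μ :=
    integrable_of_memLp_two_mul_of_integrable_inv_condExp_sq hV hd hdσ hσ2 hσvar hWint
  have had : Integrable (a * d) μ :=
    (integrable_mul_condExp_of_stronglyMeasurable hd hdX hX).congr
      (by filter_upwards [hX_cond] with ω h; simp only [Pi.mul_apply, h]; ring)
  calc ∫ ω, (B ω - d₀ ω * σ ω) * (d ω * σ ω) ∂μ = ∫ ω, (d * X) ω ∂μ :=
        integral_congr_ae (.of_forall fun ω => by simp only [X, Pi.mul_apply]; ring)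
    _ = ∫ ω, (d * μ[X|mV]) ω ∂μ :=
        (integral_mul_condExp_of_stronglyMeasurable hV hd hdX hX).symm
    _ = ∫ ω, (a * d) ω ∂μ := integral_congr_ae
        (by filter_upwards [hX_cond] with ω h; simp only [Pi.mul_apply, h]; ring)
    _ = 0 := integral_mul_eq_zero_of_condExp_eq_zero (hHV.trans hV) ha had hd_int hd_cond

/-- projection onto `Λᗮ`.
With nested sub-σ-algebras `ℋ ⊆ 𝒱 ⊆ ℱ`, `σ ∈ L²` with `E[σ | 𝒱] = 0` and
`E[σ² | 𝒱] > 0` a.s., `W := (E[σ² | 𝒱])⁻¹` integrable, `T := E[W | ℋ] > 0` a.s.: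
for any `B ∈ L²(P)` with `Bσ` integrable and `R := E[Bσ | 𝒱]` (displayed quantities in
`L²`), the element `(R − T⁻¹·E[RW | ℋ])·W·σ` belongs to `Λᗮ` and
`B − (R − T⁻¹·E[RW | ℋ])·W·σ` is orthogonal in `L²(P)` to every element of `Λᗮ`;
i.e. it is the orthogonal projection of `B` onto `Λᗮ`. -/
theorem projection_onto_LambdaPerp
    {m0 : MeasurableSpace Ω} (μ : Measure Ω) [IsProbabilityMeasure μ]
    (mH mV : MeasurableSpace Ω) (hHV : mH ≤ mV) (hV : mV ≤ m0)
    (σ : Ω → ℝ) (hσ2 : MemLp σ 2 μ)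
    (hσcond : μ[σ|mV] =ᵐ[μ] 0)
    (hσvar : ∀ᵐ ω ∂μ, 0 < (μ[(fun ω' => (σ ω')^2)|mV]) ω)
    (hWint : Integrable (Wfun μ mV σ) μ)
    (hTpos : ∀ᵐ ω ∂μ, 0 < Tfun μ mV mH σ ω)
    (B : Ω → ℝ) (hB2 : MemLp B 2 μ)
    (hBσInt : Integrable (fun ω => B ω * σ ω) μ)
    (hRWInt : Integrable (fun ω => Rfun μ mV σ B ω * Wfun μ mV σ ω) μ)
    (hdInt : Integrable (fun ω => (Rfun μ mV σ B ω - (Tfun μ mV mH σ ω)⁻¹ *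
      (μ[(fun ω' => Rfun μ mV σ B ω' * Wfun μ mV σ ω')|mH]) ω) * Wfun μ mV σ ω) μ)
    (hprojL2 : MemLp (fun ω => (Rfun μ mV σ B ω - (Tfun μ mV mH σ ω)⁻¹ *
      (μ[(fun ω' => Rfun μ mV σ B ω' * Wfun μ mV σ ω')|mH]) ω) *
      Wfun μ mV σ ω * σ ω) 2 μ) :
    (fun ω => (Rfun μ mV σ B ω - (Tfun μ mV mH σ ω)⁻¹ *
        (μ[(fun ω' => Rfun μ mV σ B ω' * Wfun μ mV σ ω')|mH]) ω) *
        Wfun μ mV σ ω * σ ω) ∈ LambdaPerp μ mV mH σ ∧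
      ∀ f ∈ LambdaPerp μ mV mH σ,
        ∫ ω, (B ω - (Rfun μ mV σ B ω - (Tfun μ mV mH σ ω)⁻¹ *
          (μ[(fun ω' => Rfun μ mV σ B ω' * Wfun μ mV σ ω')|mH]) ω) *
          Wfun μ mV σ ω * σ ω) * f ω ∂μ = 0 :=
  projection_onto_LambdaPerp_general μ mH mV hHV hV σ hσ2 hσvar hWint hTpos B hB2 hBσInt hRWInt
    hdInt hprojL2
end

section
/- Assume Σ_{t=1}^{T} E[Y_t·A_t] > 0 and Σ_{t=1}^{T} E[Y_t·(1 − A_t)] > 0. Then β' := log( (Σ_{t=1}^{T} E[Y_t·A_t]/p) / (Σ_{t=1}^{T} E[Y_t·(1 − A_t)]/(1 − p)) ) is the unique real number β satisfying the population marginal estimating equation Σ_{t=1}^{T} E[ e^{−A_t β} · (Y_t − e^{c_t + A_t β}) · J_t · (A_t − p̃) ] = 0, where J_t := (p̃/p)^{A_t}·((1 − p̃)/(1 − p))^{1 − A_t}, for any choice of ℋ_t-measurable real random variables c_t with e^{c_t} integrable. Moreover, if P(A_t = 1) = p for each t, then β' = log( Σ_{t=1}^{T} E[Y_t | A_t = 1]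 / Σ_{t=1}^{T} E[Y_t | A_t = 0] ). -/
open MeasureTheory ProbabilityTheory Real

/-! For `a ∈ {0,1}` the integrand of the estimating equation is a linear combination of
`Y·a`, `Y·(1 - a)`, `e^c·a` and `e^c`. As `c_t` is `ℋ_t`-measurable and `E[A_t | ℋ_t] = p`,
`E[e^{c_t} A_t] = p E[e^{c_t}]`, so the `e^{c_t}` terms cancel and the `t`-th summand is
`p̃(1 - p̃)(e^{-β} E[Y_t A_t]/p - E[Y_t(1 - A_t)]/(1 - p))`. The sum is thus
`p̃(1 - p̃)(e^{-β} N - D)` with `N, D > 0`, which vanishes exactly at `β = log (N / D)`.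
When `P(A_t = 1) = p`, conditioning on `{A_t = 1}` resp. `{A_t = 0}` divides by `p` resp. `1 - p`,
which gives the second expression for `β'`. -/

theorem emee_integrand_eq {a : ℝ} (ha : a = 0 ∨ a = 1) (y c β p q : ℝ) (hp : p ≠ 0)
    (hp1 : 1 - p ≠ 0) :
    exp (-(a * β)) * (y - exp (c + a * β)) * ((q / p) ^ a * ((1 - q) / (1 - p)) ^ (1 - a)) *
        (a - q) =
      q * (1 - q) * ((exp (-β) * (y * a) - exp c * a) / p
        - (y * (1 - a) - (exp c - exp c * a)) / (1 - p)) := by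
  rcases ha with rfl | rfl
  · simp only [zero_mul, neg_zero, exp_zero, add_zero, sub_zero, rpow_zero, rpow_one, one_mul,
      mul_zero, zero_sub, mul_one, sub_self, zero_div]
    field_simp
  · simp only [one_mul, sub_self, rpow_zero, rpow_one, mul_one, mul_zero, sub_zero, zero_div,
      exp_add, exp_neg]
    field_simp

theorem mul_exp_neg_mul_sub_eq_zero_iff {k N D : ℝ} (hk : k ≠ 0) (hN : 0 < N) (hD : 0 < D)
    (β : ℝ) : k * (exp (-β) * N - D) = 0 ↔ β = log (N / D) := by
  rw [mul_eq_zero, or_iff_right hk, sub_eq_zero, exp_neg, inv_mul_eq_iff_eq_mul₀ (exp_ne_zero β),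
    ← div_eq_iff hD.ne', ← exp_eq_exp (x := β), exp_log (div_pos hN hD), eq_comm]

section

variable {Ω : Type*} {m m0 : MeasurableSpace Ω} {μ : Measure Ω}

theorem integral_mul_eq_mul_integral_of_condExp_eq_const [IsFiniteMeasure μ] (hm : m ≤ m0)
    {f g : Ω → ℝ} {p : ℝ} (hg : μ[g|m] =ᵐ[μ] fun _ => p)
    (hf : StronglyMeasurable[m] f) (hfg : Integrable (f * g) μ) (hgi : Integrable g μ) :
    ∫ ω, f ω * g ω ∂μ = p * ∫ ω, f ω ∂μ := by
  have hpull : μ[f * g|m] =ᵐ[μ] fun ω => p * f ω := by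
    filter_upwards [condExp_mul_of_stronglyMeasurable_left hf hfg hgi, hg] with ω h1 h2
    rw [h1, Pi.mul_apply, h2, mul_comm]
  calc ∫ ω, f ω * g ω ∂μ = ∫ ω, (μ[f * g|m]) ω ∂μ := (integral_condExp hm).symm
    _ = p * ∫ ω, f ω ∂μ := by rw [integral_congr_ae hpull, integral_const_mul]

theorem integral_emee_integrand {A Y c : Ω → ℝ} (hA : ∀ ω, A ω = 0 ∨ A ω = 1) {p : ℝ}
    (hp : p ≠ 0) (hp1 : 1 - p ≠ 0) (q β : ℝ)
    (hYA : Integrable (fun ω => Y ω * A ω) μ) (hY1A : Integrable (fun ω => Y ω * (1 - A ω)) μ)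
    (hc : Integrable (fun ω => exp (c ω)) μ) (hAc : Integrable (fun ω => exp (c ω) * A ω) μ)
    (hAc_eq : ∫ ω, exp (c ω) * A ω ∂μ = p * ∫ ω, exp (c ω) ∂μ) :
    ∫ ω, exp (-(A ω * β)) * (Y ω - exp (c ω + A ω * β)) *
        ((q / p) ^ (A ω) * ((1 - q) / (1 - p)) ^ (1 - A ω)) * (A ω - q) ∂μ =
      q * (1 - q) * (exp (-β) * ((∫ ω, Y ω * A ω ∂μ) / p)
        - (∫ ω, Y ω * (1 - A ω) ∂μ) / (1 - p)) := by
  have hc1A : Integrable (fun ω => exp (c ω) - exp (c ω) * A ω) μ := hc.sub hAc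
  have hpos : Integrable (fun ω => (exp (-β) * (Y ω * A ω) - exp (c ω) * A ω) / p) μ :=
    ((hYA.const_mul _).sub hAc).div_const p
  have hneg :
      Integrable (fun ω => (Y ω * (1 - A ω) - (exp (c ω) - exp (c ω) * A ω)) / (1 - p)) μ :=
    (hY1A.sub hc1A).div_const (1 - p)
  simp_rw [emee_integrand_eq (hA _) _ _ β p q hp hp1]
  rw [integral_const_mul, integral_sub hpos hneg, integral_div, integral_div,
    integral_sub (hYA.const_mul _) hAc, integral_sub hY1A hc1A, integral_sub hc hAc,
    integral_const_mul, hAc_eq]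
  field_simp
  ring

theorem integral_cond_eq_integral_mul_div {s : Set Ω} (hs : MeasurableSet s) {B : Ω → ℝ}
    (hB : B = s.indicator 1) {r : ℝ} (hr : 0 ≤ r) (hμs : μ s = ENNReal.ofReal r) (Y : Ω → ℝ) :
    ∫ ω, Y ω ∂μ[|s] = (∫ ω, Y ω * B ω ∂μ) / r := by
  have hYB : (fun ω => Y ω * B ω) = s.indicator Y := by
    funext ω
    by_cases h : ω ∈ s <;> simp [hB, h]
  rw [ProbabilityTheory.cond, integral_smul_measure, hμs, hYB, integral_indicator hs, smul_eq_mul,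
    ENNReal.toReal_inv, ENNReal.toReal_ofReal hr, inv_mul_eq_div]

theorem integral_cond_eq_one {A : Ω → ℝ} (hA : Measurable A) (hA01 : ∀ ω, A ω = 0 ∨ A ω = 1)
    {p : ℝ} (hp : 0 ≤ p) (hAp : μ {ω | A ω = 1} = ENNReal.ofReal p) (Y : Ω → ℝ) :
    ∫ ω, Y ω ∂μ[|{ω | A ω = 1}] = (∫ ω, Y ω * A ω ∂μ) / p := by
  refine integral_cond_eq_integral_mul_div (hA (measurableSet_singleton 1)) ?_ hp hAp Y
  funext ω
  rcases hA01 ω with h | h <;> simp [h]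

theorem integral_cond_eq_zero [IsProbabilityMeasure μ] {A : Ω → ℝ} (hA : Measurable A)
    (hA01 : ∀ ω, A ω = 0 ∨ A ω = 1) {p : ℝ} (hp : 0 ≤ p) (hp1 : p ≤ 1)
    (hAp : μ {ω | A ω = 1} = ENNReal.ofReal p) (Y : Ω → ℝ) :
    ∫ ω, Y ω ∂μ[|{ω | A ω = 0}] = (∫ ω, Y ω * (1 - A ω) ∂μ) / (1 - p) := by
  have hcompl : {ω | A ω = 0} = {ω | A ω = 1}ᶜ := by
    ext ω
    rcases hA01 ω with h | h <;> simp [h]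
  have hμ : μ {ω | A ω = 0} = ENNReal.ofReal (1 - p) := by
    have hs : MeasurableSet {ω | A ω = 1} := hA (measurableSet_singleton 1)
    rw [hcompl, prob_compl_eq_one_sub hs, hAp, ENNReal.ofReal_sub _ hp, ENNReal.ofReal_one]
  refine integral_cond_eq_integral_mul_div (hA (measurableSet_singleton 0)) ?_ (by linarith) hμ Y
  funext ω
  rcases hA01 ω with h | h <;> simp [h]

theorem integral_emee_integrand_of_condExp_eq_const [IsFiniteMeasure μ] (hm : m ≤ m0)
    {A Y c : Ω → ℝ} (hA : AEStronglyMeasurable A μ) (hA01 : ∀ ω, A ω = 0 ∨ A ω = 1) {p : ℝ}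
    (hp : p ≠ 0) (hp1 : 1 - p ≠ 0) (hrand : μ[A|m] =ᵐ[μ] fun _ => p)
    (hY : Integrable Y μ) (hc : StronglyMeasurable[m] c)
    (hcInt : Integrable (fun ω => exp (c ω)) μ) (q β : ℝ) :
    ∫ ω, exp (-(A ω * β)) * (Y ω - exp (c ω + A ω * β)) *
        ((q / p) ^ (A ω) * ((1 - q) / (1 - p)) ^ (1 - A ω)) * (A ω - q) ∂μ =
      q * (1 - q) * (exp (-β) * ((∫ ω, Y ω * A ω ∂μ) / p)
        - (∫ ω, Y ω * (1 - A ω) ∂μ) / (1 - p)) := by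
  have hA_le : ∀ᵐ ω ∂μ, ‖A ω‖ ≤ 1 := ae_of_all _ fun ω => by rcases hA01 ω with h | h <;> simp [h]
  have h1A_le : ∀ᵐ ω ∂μ, ‖1 - A ω‖ ≤ 1 :=
    ae_of_all _ fun ω => by rcases hA01 ω with h | h <;> simp [h]
  have hAc : Integrable (fun ω => exp (c ω) * A ω) μ := hcInt.mul_bdd hA hA_le
  refine integral_emee_integrand hA01 hp hp1 q β (hY.mul_bdd hA hA_le)
    (hY.mul_bdd (aestronglyMeasurable_const.sub hA) h1A_le) hcInt hAc ?_
  exact integral_mul_eq_mul_integral_of_condExp_eq_const hm hrand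
    (continuous_exp.comp_stronglyMeasurable hc) hAc
    (Integrable.of_bound hA 1 hA_le)

end

/-- probability limit of the EMEE estimator under a constant,
fully marginal excursion effect model with `Δ = 1`.
For `t = 1, …, T` let `ℋ_t ⊆ ℱ` be sub-σ-algebras, `A_t` `{0,1}`-valued treatments with
constant randomization probability `E[A_t | ℋ_t] = p ∈ (0,1)` a.s., `Y_t` bounded
nonnegative proximal outcomes, and `p̃ ∈ (0,1)` a fixed centering probability.  Assume
`Σ_t E[Y_t A_t] > 0` and `Σ_t E[Y_t(1 − A_t)] > 0`.  Then
`β' := log((Σ_t E[Y_t A_t]/p)/(Σ_t E[Y_t(1 − A_t)]/(1 − p)))` is the unique real `β`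
solving the population marginal estimating equation
`Σ_t E[e^{−A_t β}(Y_t − e^{c_t + A_t β})·J_t·(A_t − p̃)] = 0`, where
`J_t := (p̃/p)^{A_t}((1 − p̃)/(1 − p))^{1 − A_t}`, for any ℋ_t-measurable `c_t` with
`e^{c_t}` integrable.  Moreover, if `P(A_t = 1) = p` for each `t`, then
`β' = log(Σ_t E[Y_t | A_t = 1] / Σ_t E[Y_t | A_t = 0])`. -/
theorem emee_probability_limit
    {Ω : Type*} {m0 : MeasurableSpace Ω} (μ : Measure Ω) [IsProbabilityMeasure μ]
    (T : ℕ) (mH : ℕ → MeasurableSpace Ω) (hmH : ∀ t ∈ Finset.Icc 1 T, mH t ≤ m0)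
    (A : ℕ → Ω → ℝ) (hA : ∀ t ∈ Finset.Icc 1 T, Measurable (A t))
    (hA01 : ∀ t ∈ Finset.Icc 1 T, ∀ ω, A t ω = 0 ∨ A t ω = 1)
    (p : ℝ) (hp : 0 < p ∧ p < 1)
    (hrand : ∀ t ∈ Finset.Icc 1 T, μ[A t|mH t] =ᵐ[μ] fun _ => p)
    (Y : ℕ → Ω → ℝ) (hYmeas : ∀ t ∈ Finset.Icc 1 T, Measurable (Y t))
    (hY0 : ∀ t ∈ Finset.Icc 1 T, ∀ ω, 0 ≤ Y t ω)
    (hYbd : ∃ C, ∀ t ∈ Finset.Icc 1 T, ∀ ω, Y t ω ≤ C)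
    (ptil : ℝ) (hptil : 0 < ptil ∧ ptil < 1)
    (hnum : 0 < ∑ t ∈ Finset.Icc 1 T, ∫ ω, Y t ω * A t ω ∂μ)
    (hden : 0 < ∑ t ∈ Finset.Icc 1 T, ∫ ω, Y t ω * (1 - A t ω) ∂μ)
    (c : ℕ → Ω → ℝ) (hc : ∀ t ∈ Finset.Icc 1 T, StronglyMeasurable[mH t] (c t))
    (hcInt : ∀ t ∈ Finset.Icc 1 T, Integrable (fun ω => exp (c t ω)) μ) :
    (∀ β : ℝ,
      (∑ t ∈ Finset.Icc 1 T, ∫ ω, exp (-(A t ω * β)) *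
          (Y t ω - exp (c t ω + A t ω * β)) *
          ((ptil / p) ^ (A t ω) * ((1 - ptil) / (1 - p)) ^ (1 - A t ω)) *
          (A t ω - ptil) ∂μ) = 0 ↔
        β = log ((∑ t ∈ Finset.Icc 1 T, (∫ ω, Y t ω * A t ω ∂μ) / p) /
          (∑ t ∈ Finset.Icc 1 T, (∫ ω, Y t ω * (1 - A t ω) ∂μ) / (1 - p)))) ∧
    ((∀ t ∈ Finset.Icc 1 T, μ {ω | A t ω = 1} = ENNReal.ofReal p) →
      log ((∑ t ∈ Finset.Icc 1 T, (∫ ω, Y t ω * A t ω ∂μ) / p) /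
          (∑ t ∈ Finset.Icc 1 T, (∫ ω, Y t ω * (1 - A t ω) ∂μ) / (1 - p)))
        = log ((∑ t ∈ Finset.Icc 1 T, ∫ ω, Y t ω ∂(μ[|{ω | A t ω = 1}])) /
            (∑ t ∈ Finset.Icc 1 T, ∫ ω, Y t ω ∂(μ[|{ω | A t ω = 0}])))) := by
  obtain ⟨hp0, hp1⟩ := hp
  obtain ⟨hq0, hq1⟩ := hptil
  obtain ⟨C, hC⟩ := hYbd
  have hp1' : 0 < 1 - p := by linarith
  have hYint : ∀ t ∈ Finset.Icc 1 T, Integrable (Y t) μ := fun t ht =>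
    Integrable.of_bound (hYmeas t ht).aestronglyMeasurable C
      (ae_of_all _ fun ω => by rw [norm_of_nonneg (hY0 t ht ω)]; exact hC t ht ω)
  refine ⟨fun β => ?_, fun hAp => ?_⟩
  · rw [Finset.sum_congr rfl fun t ht => integral_emee_integrand_of_condExp_eq_const (hmH t ht)
        (hA t ht).aestronglyMeasurable (hA01 t ht) hp0.ne' hp1'.ne' (hrand t ht) (hYint t ht)
        (hc t ht) (hcInt t ht) ptil β,
      ← Finset.mul_sum, Finset.sum_sub_distrib, ← Finset.mul_sum]
    refine mul_exp_neg_mul_sub_eq_zero_iff (mul_pos hq0 (sub_pos.2 hq1)).ne' ?_ ?_ β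
    · rw [← Finset.sum_div]; exact div_pos hnum hp0
    · rw [← Finset.sum_div]; exact div_pos hden hp1'
  · congr 2 <;> refine Finset.sum_congr rfl fun t ht => ?_
    · rw [integral_cond_eq_one (hA t ht) (hA01 t ht) hp0.le (hAp t ht)]
    · rw [integral_cond_eq_zero (hA t ht) (hA01 t ht) hp0.le hp1.le (hAp t ht)]
end
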